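/- arXiv:math/0402404 — 2 statements merged into one kernel-verified Lean document; each statement's English description precedes it below -/
import Mathlib

section
/- Let σ: 𝓗 → ℝ satisfy the weak action selector axioms, and suppose H, K ∈ 𝓗 are such that H_t = 0 for t ∈ [0,1/2], K_t = 0 for t ∈ [1/2,1], and the time-1 map φ_K displaces supp H (φ_K(supp H) ∩ supp H = ∅). Then for every τ ∈ (0,1], the set of contractible 1-periodic orbits of τH#K equals that of K, and hence Σ°(τH#K) = Σ°(K). -/
open Set MeasureTheory intervalIntegral
open scoped ENNReal NNReal

/-- An abstract setting of Hamiltonian dynamics on a symplectic manifold `(M, ω)`: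
the Hamiltonian flow, the notion of contractible loops, the set of symplectic areas
`∫_{x̄} ω` of capping discs of a contractible loop, and the notion of critical points. -/
structure HamSetting (M : Type*) [TopologicalSpace M] where
  /-- `flow H t` is the time-`t` map `φ_H^t` of the Hamiltonian flow of `H`. -/
  flow : (ℝ → M → ℝ) → ℝ → M → M
  flow_zero : ∀ H x, flow H 0 x = x
  /-- whether a loop is contractible in `M` -/
  contractible : (ℝ → M) → Prop
  const_contractible : ∀ p : M, contractible fun _ => p
  /-- the set of symplectic areas `∫_{x̄} ω` of capping discs `x̄` of a loop -/
  capArea : (ℝ → M) → Set ℝ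
  capArea_const : ∀ p : M, (0 : ℝ) ∈ capArea fun _ => p
  /-- abstract criticality predicate for autonomous Hamiltonians -/
  isCritPt : (M → ℝ) → M → Prop
  /-- a fixed point of the autonomous flow is a critical point -/
  fixed_isCrit : ∀ (H : M → ℝ) (p : M), (∀ t, flow (fun _ => H) t p = p) → isCritPt H p

namespace HamSetting

variable {M : Type*} [TopologicalSpace M]

/-- the support of a time-dependent Hamiltonian -/
def supp (H : ℝ → M → ℝ) : Set M := closure (⋃ t ∈ Icc (0 : ℝ) 1, {x | H t x ≠ 0})

/-- `H ∈ 𝓗(I × A)`: compactly supported, with support in `I × Int A` -/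
def HamOn (A : Set M) (H : ℝ → M → ℝ) : Prop :=
  IsCompact (supp H) ∧ supp H ⊆ interior A

variable (S : HamSetting M)

/-- `x` is a trajectory of the Hamiltonian flow of `H` -/
def IsOrbit (H : ℝ → M → ℝ) (x : ℝ → M) : Prop := ∀ t, x t = S.flow H t (x 0)

/-- `x` is a `1`-periodic orbit of the Hamiltonian flow of `H` -/
def IsPerOrbit (H : ℝ → M → ℝ) (x : ℝ → M) : Prop :=
  S.IsOrbit H x ∧ ∀ t, x (t + 1) = x t

/-- the contractible action spectrum `Σ°(H)`: values
`𝒜_H(x̄) = -∫_{x̄} ω + ∫₀¹ H(t, x(t)) dt` over capped contractible 1-periodic orbits -/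
def actionSpectrum (H : ℝ → M → ℝ) : Set ℝ :=
  {a | ∃ x : ℝ → M, S.IsPerOrbit H x ∧ S.contractible x ∧
    ∃ A ∈ S.capArea x, a = -A + ∫ t in (0 : ℝ)..1, H t (x t)}

/-- `E⁺(H) = ∫₀¹ max_x H(t,x) dt` -/
noncomputable def Eplus (H : ℝ → M → ℝ) : ℝ := ∫ t in (0 : ℝ)..1, sSup (range (H t))

/-- the Hofer norm `‖K‖ = ∫₀¹ (max_x K - min_x K) dt` -/
noncomputable def hofer (K : ℝ → M → ℝ) : ℝ :=
  ∫ t in (0 : ℝ)..1, (sSup (range (K t)) - sInf (range (K t)))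

variable [Nonempty M]

/-- the composition `(H # K)(t,x) = H(t,x) + K(t, (φ_H^t)⁻¹(x))`, generating `φ_H ∘ φ_K` -/
noncomputable def comp (H K : ℝ → M → ℝ) : ℝ → M → ℝ :=
  fun t x => H t x + K t (Function.invFun (S.flow H t) x)

/-- a simple Hamiltonian: compactly supported, autonomous, `H ≥ 0`, equal to `max H` on a
nonempty open set, and with `0` and `max H` as its only critical values -/
structure Simple (H : M → ℝ) : Prop where
  compactSupp : IsCompact (closure {x | H x ≠ 0})
  nonneg : ∀ x, 0 ≤ H x
  maxOnOpen : ∃ U : Set M, IsOpen U ∧ U.Nonempty ∧ ∀ x ∈ U, H x = sSup (range H)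
  critVals : ∀ p, S.isCritPt H p → H p = 0 ∨ H p = sSup (range H)

/-- `HZ°`-admissible: the flow has no non-constant, contractible in `M`, `T`-periodic orbit
with period `T ≤ 1` -/
def HZadm (H : M → ℝ) : Prop :=
  ∀ (x : ℝ → M) (T : ℝ), 0 < T → T ≤ 1 → S.IsOrbit (fun _ => H) x →
    (∀ t, x (t + T) = x t) → S.contractible x → ∀ t, x t = x 0

/-- `HZ`-admissible: the flow has no non-constant `T`-periodic orbit with period `T ≤ 1` -/
def HZadmFull (H : M → ℝ) : Prop :=
  ∀ (x : ℝ → M) (T : ℝ), 0 < T → T ≤ 1 → S.IsOrbit (fun _ => H) x →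
    (∀ t, x (t + T) = x t) → ∀ t, x t = x 0

/-- a weak action selector for `(M, ω)` -/
structure WeakSelector where
  σ : (ℝ → M → ℝ) → ℝ
  AS1 : ∀ H, HamOn univ H → σ H ∈ S.actionSpectrum H
  AS2 : ∀ H : M → ℝ, S.Simple H → H ≠ 0 → HamOn univ (fun _ => H) → 0 < σ fun _ => H
  AS3 : ∀ H, HamOn univ H → σ H ≤ Eplus H
  AS4 : ∀ F : ℝ → ℝ → M → ℝ, (Continuous fun p : ℝ × ℝ × M => F p.1 p.2.1 p.2.2) →
    (∀ τ, HamOn univ (F τ)) → Continuous fun τ => σ (F τ)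
  AS5 : ∀ H K, HamOn univ H → HamOn univ K → σ (S.comp H K) ≤ σ H + Eplus K

/-- an action selector: a weak action selector satisfying in addition `(AS2⁺)` -/
structure Selector extends S.WeakSelector where
  AS2plus : ∀ H : M → ℝ, S.Simple H → S.HZadm H → HamOn univ (fun _ => H) →
    σ (fun _ => H) = sSup (range H)

/-- the spectral capacity `c_σ(A, M) = sup {σ(H) : H ∈ 𝓢(A)}` -/
noncomputable def specCapLow (W : S.WeakSelector) (A : Set M) : ℝ≥0∞ :=
  ⨆ H ∈ {H : M → ℝ | S.Simple H ∧ HamOn A fun _ => H}, ENNReal.ofReal (W.σ fun _ => H)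

/-- the spectral capacity `c^σ(A, M) = sup {σ(H) : H ∈ 𝓗(I × A)}` -/
noncomputable def specCapUp (W : S.WeakSelector) (A : Set M) : ℝ≥0∞ :=
  ⨆ H ∈ {H : ℝ → M → ℝ | HamOn A H}, ENNReal.ofReal (W.σ H)

/-- the displacement energy of a compact subset -/
noncomputable def dispEnergyCompact (A : Set M) : ℝ≥0∞ :=
  ⨅ K ∈ {K : ℝ → M → ℝ | HamOn univ K ∧ Disjoint (S.flow K 1 '' A) A},
    ENNReal.ofReal (hofer K)

/-- the displacement energy `e(A, M)` of an arbitrary subset -/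
noncomputable def dispEnergy (A : Set M) : ℝ≥0∞ :=
  ⨆ C ∈ {C : Set M | C ⊆ A ∧ IsCompact C}, S.dispEnergyCompact C

/-- the π₁-sensitive Hofer–Zehnder capacity `c°_HZ(A, M)` -/
noncomputable def capHZcirc (A : Set M) : ℝ≥0∞ :=
  ⨆ H ∈ {H : M → ℝ | S.Simple H ∧ HamOn A (fun _ => H) ∧ S.HZadm H},
    ENNReal.ofReal (sSup (range H))

/-- the Hofer–Zehnder capacity `c_HZ(A)` -/
noncomputable def capHZ (A : Set M) : ℝ≥0∞ :=
  ⨆ H ∈ {H : M → ℝ | S.Simple H ∧ HamOn A (fun _ => H) ∧ S.HZadmFull H},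
    ENNReal.ofReal (sSup (range H))

end HamSetting

/-- Suppose `H_t = 0` for `t ∈ [0,1/2]` and `K_t = 0` for `t ∈ [1/2,1]`, and the time-1 map
`φ_K` displaces `supp H`. With these time parametrizations `(τH # K)(t,x) = τH(t,x) + K(t,x)`
and its flow is the flow of `K` on `[0,1/2]` followed by the flow of `τH` applied after `φ_K`
(hypotheses `h1`–`h6` record these standard flow properties, including that the flow of `τH`
is supported in `supp H`). Then for every `τ ∈ (0,1]` the set of contractible 1-periodic
orbits of `τH # K` equals that of `K`, and hence `Σ°(τH # K) = Σ°(K)`. -/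
theorem stmt4 {M : Type*} [TopologicalSpace M] [Nonempty M] (S : HamSetting M)
    (H K : ℝ → M → ℝ)
    (hH : HamSetting.HamOn Set.univ H) (hK : HamSetting.HamOn Set.univ K)
    (hHt : ∀ t ∈ Set.Icc (0:ℝ) (1/2), ∀ x, H t x = 0)
    (hKt : ∀ t ∈ Set.Icc (1/2:ℝ) 1, ∀ x, K t x = 0)
    (hdisp : Disjoint (S.flow K 1 '' HamSetting.supp H) (HamSetting.supp H))
    (τ : ℝ) (hτ : τ ∈ Set.Ioc (0:ℝ) 1)
    (G : ℝ → M → ℝ) (hG : G = fun t x => τ * H t x + K t x)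
    (h1 : ∀ t ∈ Set.Icc (0:ℝ) (1/2), ∀ x, S.flow G t x = S.flow K t x)
    (h2 : ∀ t ∈ Set.Icc (1/2:ℝ) 1, ∀ x,
      S.flow G t x = S.flow (fun s y => τ * H s y) t (S.flow K 1 x))
    (h3 : ∀ t ∈ Set.Icc (1/2:ℝ) 1, ∀ x, S.flow K t x = S.flow K 1 x)
    (h4 : ∀ t ∈ Set.Icc (0:ℝ) (1/2), ∀ x, S.flow (fun s y => τ * H s y) t x = x)
    (h5 : ∀ x, x ∉ HamSetting.supp H → ∀ t, S.flow (fun s y => τ * H s y) t x = x)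
    (h6 : ∀ t, S.flow (fun s y => τ * H s y) t '' HamSetting.supp H ⊆ HamSetting.supp H)
    (h7 : ∀ (t : ℝ) (x : M), S.flow G (t + 1) x = S.flow G t (S.flow G 1 x))
    (h8 : ∀ (t : ℝ) (x : M), S.flow K (t + 1) x = S.flow K t (S.flow K 1 x)) :
    {x : ℝ → M | S.IsPerOrbit G x ∧ S.contractible x} =
      {x : ℝ → M | S.IsPerOrbit K x ∧ S.contractible x} ∧
    S.actionSpectrum G = S.actionSpectrum K := by
  have h12 : (1:ℝ)/2 ∈ Set.Icc (0:ℝ) (1/2) := by norm_num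
  have h121 : (1:ℝ) ∈ Set.Icc (1/2:ℝ) 1 := by norm_num
  -- support membership criterion
  have hsupp : ∀ (t : ℝ), t ∈ Set.Icc (0:ℝ) 1 → ∀ p : M, p ∉ HamSetting.supp H →
      H t p = 0 := by
    intro t ht p hp
    by_contra hne
    exact hp (subset_closure (Set.mem_biUnion ht hne))
  -- Lemma C: if `flow K 1 p = p` and `p ∉ supp H` then the flows of G and K agree at p
  have key : ∀ p : M, S.flow K 1 p = p → p ∉ HamSetting.supp H →
      ∀ t, S.flow G t p = S.flow K t p := by
    intro p hfix hp
    have hunit : ∀ t ∈ Set.Icc (0:ℝ) 1, S.flow G t p = S.flow K t p := by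
      intro t ht
      rcases le_or_gt t (1/2) with h | h
      · exact h1 t ⟨ht.1, h⟩ p
      · have ht' : t ∈ Set.Icc (1/2:ℝ) 1 := ⟨le_of_lt h, ht.2⟩
        rw [h2 t ht' p, hfix, h5 p hp t, h3 t ht' p, hfix]
    have hG1 : S.flow G 1 p = p := by
      rw [hunit 1 (by norm_num), hfix]
    have hperG : Function.Periodic (fun t => S.flow G t p) 1 := by
      intro t
      simp only [h7 t p, hG1]
    have hperK : Function.Periodic (fun t => S.flow K t p) 1 := by
      intro t
      simp only [h8 t p, hfix]
    intro t
    have e1 : S.flow G (t - (⌊t⌋ : ℝ) * 1) p = S.flow G t p := hperG.sub_int_mul_eq ⌊t⌋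
    have e2 : S.flow K (t - (⌊t⌋ : ℝ) * 1) p = S.flow K t p := hperK.sub_int_mul_eq ⌊t⌋
    have hfr : t - (⌊t⌋ : ℝ) * 1 ∈ Set.Icc (0:ℝ) 1 := by
      constructor
      · have := Int.sub_floor_div_mul_nonneg t one_pos
        simpa using (Int.fract_nonneg t)
      · have := Int.fract_lt_one t
        have : t - (⌊t⌋:ℝ) * 1 = Int.fract t := by rw [Int.fract]; ring
        rw [this]
        exact le_of_lt (Int.fract_lt_one t)
    rw [← e1, ← e2, hunit _ hfr]
  -- Lemma A: initial point of a periodic G-orbit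
  have lemA : ∀ x : ℝ → M, S.IsPerOrbit G x →
      x 0 ∉ HamSetting.supp H ∧ S.flow K 1 (x 0) = x 0 := by
    intro x ⟨horb, hper⟩
    set p := x 0 with hpdef
    have hG1 : S.flow G 1 p = p := by
      have := hper 0
      rw [horb (0+1), horb 0, S.flow_zero] at this
      simpa using this
    have h2' : S.flow (fun s y => τ * H s y) 1 (S.flow K 1 p) = p := by
      rw [← h2 1 h121 p, hG1]
    set q := S.flow K 1 p with hq
    have hpns : p ∉ HamSetting.supp H := by
      intro hp
      have hqn : q ∉ HamSetting.supp H :=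
        Set.disjoint_left.mp hdisp (Set.mem_image_of_mem _ hp)
      have : q = p := by rw [← h2', h5 q hqn 1]
      exact hqn (this ▸ hp)
    have hqns : q ∉ HamSetting.supp H := by
      intro hq'
      exact hpns (h2' ▸ h6 1 (Set.mem_image_of_mem _ hq'))
    have : q = p := by rw [← h2', h5 q hqns 1]
    exact ⟨hpns, this⟩
  -- Lemma B: initial point of a periodic K-orbit
  have lemB : ∀ x : ℝ → M, S.IsPerOrbit K x →
      x 0 ∉ HamSetting.supp H ∧ S.flow K 1 (x 0) = x 0 := by
    intro x ⟨horb, hper⟩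
    have hK1 : S.flow K 1 (x 0) = x 0 := by
      have := hper 0
      rw [horb (0+1), horb 0, S.flow_zero] at this
      simpa using this
    refine ⟨?_, hK1⟩
    intro hp
    exact Set.disjoint_left.mp hdisp (hK1 ▸ Set.mem_image_of_mem _ hp) hp
  -- orbit set equality
  have hset : {x : ℝ → M | S.IsPerOrbit G x ∧ S.contractible x} =
      {x : ℝ → M | S.IsPerOrbit K x ∧ S.contractible x} := by
    ext x
    simp only [Set.mem_setOf_eq]
    constructor
    · rintro ⟨hpo, hc⟩
      obtain ⟨hns, hfix⟩ := lemA x hpo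
      refine ⟨⟨fun t => ?_, hpo.2⟩, hc⟩
      rw [hpo.1 t, key (x 0) hfix hns t]
    · rintro ⟨hpo, hc⟩
      obtain ⟨hns, hfix⟩ := lemB x hpo
      refine ⟨⟨fun t => ?_, hpo.2⟩, hc⟩
      rw [hpo.1 t, key (x 0) hfix hns t]
  refine ⟨hset, ?_⟩
  -- integrand equality along periodic orbits of K
  have hint : ∀ x : ℝ → M, S.IsPerOrbit K x →
      (∫ t in (0:ℝ)..1, G t (x t)) = ∫ t in (0:ℝ)..1, K t (x t) := by
    intro x hpo
    obtain ⟨hns, hfix⟩ := lemB x hpo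
    apply intervalIntegral.integral_congr
    intro t ht
    rw [Set.uIcc_of_le (by norm_num : (0:ℝ) ≤ 1)] at ht
    have hH0 : H t (x t) = 0 := by
      rcases le_or_gt t (1/2) with h | h
      · exact hHt t ⟨ht.1, h⟩ _
      · have : x t = x 0 := by
          rw [hpo.1 t, h3 t ⟨le_of_lt h, ht.2⟩, hfix]
        rw [this]
        exact hsupp t ht _ hns
    rw [hG]
    simp [hH0]
  -- spectra equality
  ext a
  simp only [HamSetting.actionSpectrum, Set.mem_setOf_eq]
  constructor
  · rintro ⟨x, hpo, hc, A, hA, ha⟩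
    have hx : x ∈ {x : ℝ → M | S.IsPerOrbit K x ∧ S.contractible x} := by
      rw [← hset]; exact ⟨hpo, hc⟩
    refine ⟨x, hx.1, hx.2, A, hA, ?_⟩
    rw [ha, hint x hx.1]
  · rintro ⟨x, hpo, hc, A, hA, ha⟩
    have hx : x ∈ {x : ℝ → M | S.IsPerOrbit G x ∧ S.contractible x} := by
      rw [hset]; exact ⟨hpo, hc⟩
    refine ⟨x, hx.1, hx.2, A, hA, ?_⟩
    rw [ha, hint x hpo]
end

section
/- (Key lemma in Theorem 2.) Let (M,ω) be a rational symplectic manifold with index of rationality ρ (the positive generator of ω(π₂(M)), or ∞ if ω(π₂(M))=0), and let σ be a weak action selector. Let H ∈ 𝓢(M) be a nonzero simple Hamiltonian with 0 < σ(H) < max H < ρ. If (x, x̄) ∈ P̄°(H) realizes σ(H) = A_H(x̄), then the orbit x is not constant. -/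
open Set MeasureTheory intervalIntegral
open scoped ENNReal NNReal

/-- Lemma 2.3 (key lemma in Theorem 2): let `(M, ω)` be rational with index of rationality
`ρ` (so the symplectic area of every sphere — i.e. of every capping disc of a constant loop —
lies in `ρℤ`: hypothesis `hrat`), and let `σ` be a weak action selector. Let `H ∈ 𝓢(M)` be a
simple Hamiltonian with `0 < σ(H) < max H < ρ`. If `(x, x̄) ∈ P̄°(H)` realizes
`σ(H) = 𝒜_H(x̄) = -∫_{x̄}ω + ∫₀¹ H(x(t)) dt`, then the orbit `x` is not constant. -/
theorem stmt12 {M : Type*} [TopologicalSpace M] [Nonempty M] (S : HamSetting M)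
    (W : S.WeakSelector) (ρ : ℝ) (hρ : 0 < ρ)
    (hrat : ∀ (p : M) (a : ℝ), a ∈ S.capArea (fun _ => p) → ∃ k : ℤ, a = (k : ℝ) * ρ)
    (H : M → ℝ) (hsimple : S.Simple H)
    (hH : HamSetting.HamOn Set.univ (fun _ => H))
    (hσpos : 0 < W.σ fun _ => H)
    (hσlt : W.σ (fun _ => H) < sSup (Set.range H))
    (hmaxlt : sSup (Set.range H) < ρ)
    (x : ℝ → M) (a : ℝ)
    (hx : S.IsPerOrbit (fun _ => H) x) (hc : S.contractible x)
    (ha : a ∈ S.capArea x)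
    (hact : W.σ (fun _ => H) = -a + ∫ t in (0:ℝ)..1, H (x t)) :
    ∃ t, x t ≠ x 0 := by
  by_contra hcon
  push_neg at hcon
  -- x is constant
  have hxconst : x = fun _ => x 0 := funext fun t => hcon t
  -- x 0 is a fixed point
  have hfix : ∀ t, S.flow (fun _ => H) t (x 0) = x 0 := fun t => by
    rw [← hx.1 t, hcon t]
  have hcrit := S.fixed_isCrit H (x 0) hfix
  -- the area a is a multiple of ρ
  obtain ⟨k, hk⟩ := hrat (x 0) a (hxconst ▸ ha)
  -- the integral equals H (x 0)
  have hint : (∫ t in (0:ℝ)..1, H (x t)) = H (x 0) := by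
    have : ∀ t, H (x t) = H (x 0) := fun t => by rw [hcon t]
    simp only [this]
    simp
  rw [hint] at hact
  have hCpos : 0 < sSup (Set.range H) := lt_trans hσpos hσlt
  rcases hsimple.critVals (x 0) hcrit with h0 | hC
  · -- H (x 0) = 0 : σ = -a = -kρ
    rw [h0, add_zero, hk] at hact
    have hkneg : (k : ℝ) < 0 := by nlinarith
    have : (k : ℝ) ≤ -1 := by exact_mod_cast Int.le_of_lt_add_one (by exact_mod_cast (by push_cast; linarith : (k:ℝ) < -1 + 1))
    nlinarith
  · -- H (x 0) = max H : σ = -kρ + C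
    rw [hC, hk] at hact
    have hkpos : (0 : ℝ) < k := by nlinarith
    have : (1 : ℝ) ≤ k := by exact_mod_cast hkpos
    nlinarith
end
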